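/- Let C be a finite family of nonempty bounded open intervals of the real line, where each c ∈ C is given by endpoints α(c) < β(c), and suppose the family is pairwise non-nested: for any two distinct c, c' ∈ C, neither (α(c), β(c)) ⊆ (α(c'), β(c')) nor (α(c'), β(c')) ⊆ (α(c), β(c)). Call a subfamily independent if its members are pairwise disjoint as intervals. Then there exists an independent subfamily M ⊆ C of maximum cardinality (among all independent subfamilies of C) such that for every c ∈ C \ M there is some c' ∈ M with α(c) ∈ (α(c'), β(c')). -/

import Mathlib

/-!
Among the independent subfamilies of maximum cardinality take one, `M`, minimising the sum of
the left endpoints. An interval `c ∉ M` meets some member of `M`, otherwise `M ∪ {c}` would be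
larger. If the left endpoint of `c` lay in no member of `M`, non-nestedness would force every
member `c'` of `M` meeting `c` to interleave with it as `α(c) < α(c') < β(c) < β(c')`; two such
members would share the point `β(c)`, so there is exactly one, and exchanging it for `c` gives a
maximum independent subfamily with a smaller sum of left endpoints.
-/

/-- A subfamily of intervals (given by endpoint pairs) is *independent* if its
members are pairwise disjoint as open intervals. -/
def IndepFam (M : Finset (ℝ × ℝ)) : Prop :=
  ∀ c ∈ M, ∀ c' ∈ M, c ≠ c' →
    Disjoint (Set.Ioo c.1 c.2) (Set.Ioo c'.1 c'.2)

theorem interleave_of_not_nested {α : Type*} [LinearOrder α] [DenselyOrdered α] {a b a' b' : α}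
    (hmeet : ¬Disjoint (Set.Ioo a b) (Set.Ioo a' b'))
    (hnot_sub : ¬Set.Ioo a b ⊆ Set.Ioo a' b') (hnot_sup : ¬Set.Ioo a' b' ⊆ Set.Ioo a b)
    (ha : a ∉ Set.Ioo a' b') : a < a' ∧ a' < b ∧ b < b' := by
  rw [Set.Ioo_disjoint_Ioo, not_le, lt_min_iff, max_lt_iff, max_lt_iff] at hmeet
  obtain ⟨⟨hab, ha'b⟩, hab', ha'b'⟩ := hmeet
  rw [Set.Ioo_subset_Ioo_iff hab] at hnot_sub
  rw [Set.Ioo_subset_Ioo_iff ha'b'] at hnot_sup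
  simp only [Set.mem_Ioo, not_and_or, not_lt] at ha
  grind

namespace IndepFam

variable {M : Finset (ℝ × ℝ)}

theorem mono (hM : IndepFam M) {N : Finset (ℝ × ℝ)} (hNM : N ⊆ M) : IndepFam N :=
  fun c hc c' hc' => hM c (hNM hc) c' (hNM hc')

theorem insert_of_disjoint (hM : IndepFam M) {c : ℝ × ℝ}
    (hc : ∀ d ∈ M, d ≠ c → Disjoint (Set.Ioo c.1 c.2) (Set.Ioo d.1 d.2)) :
    IndepFam (insert c M) := by
  intro d hd e he hde
  rcases Finset.mem_insert.mp hd with rfl | hdM <;> rcases Finset.mem_insert.mp he with rfl | heM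
  · exact absurd rfl hde
  · exact hc e heM (Ne.symm hde)
  · exact (hc d hdM hde).symm
  · exact hM d hdM e heM hde

end IndepFam

def NonNested (C : Finset (ℝ × ℝ)) : Prop :=
  ∀ c ∈ C, ∀ c' ∈ C, c ≠ c' →
    ¬Set.Ioo c.1 c.2 ⊆ Set.Ioo c'.1 c'.2 ∧ ¬Set.Ioo c'.1 c'.2 ⊆ Set.Ioo c.1 c.2

def IsMaxIndepFam (C M : Finset (ℝ × ℝ)) : Prop :=
  M ⊆ C ∧ IndepFam M ∧ ∀ M' ⊆ C, IndepFam M' → M'.card ≤ M.card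

theorem exists_isMaxIndepFam_forall_sum_fst_le (C : Finset (ℝ × ℝ)) :
    ∃ M, IsMaxIndepFam C M ∧ ∀ M', IsMaxIndepFam C M' → ∑ x ∈ M, x.1 ≤ ∑ x ∈ M', x.1 := by
  classical
  obtain ⟨M₀, hM₀, hM₀max⟩ := (C.powerset.filter IndepFam).exists_max_image Finset.card
    ⟨∅, by simp [IndepFam]⟩
  rw [Finset.mem_filter, Finset.mem_powerset] at hM₀
  have hmax : IsMaxIndepFam C M₀ := ⟨hM₀.1, hM₀.2, fun M' hM'C hM' =>
    hM₀max M' (Finset.mem_filter.mpr ⟨Finset.mem_powerset.mpr hM'C, hM'⟩)⟩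
  obtain ⟨M, hM, hMmin⟩ := (C.powerset.filter (IsMaxIndepFam C)).exists_min_image
    (fun M => ∑ x ∈ M, x.1) ⟨M₀, by simpa [Finset.mem_filter] using ⟨hmax.1, hmax⟩⟩
  refine ⟨M, (Finset.mem_filter.mp hM).2, fun M' hM' => hMmin M' ?_⟩
  exact Finset.mem_filter.mpr ⟨Finset.mem_powerset.mpr hM'.1, hM'⟩

namespace IsMaxIndepFam

variable {C M : Finset (ℝ × ℝ)} {c : ℝ × ℝ}

theorem exists_not_disjoint (hM : IsMaxIndepFam C M) (hc : c ∈ C) (hcM : c ∉ M) :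
    ∃ c' ∈ M, ¬Disjoint (Set.Ioo c.1 c.2) (Set.Ioo c'.1 c'.2) := by
  by_contra! hdisj
  have hcard := hM.2.2 (insert c M) (Finset.insert_subset hc hM.1)
    (hM.2.1.insert_of_disjoint fun d hd _ => hdisj d hd)
  rw [Finset.card_insert_of_notMem hcM] at hcard
  omega

theorem exchange (hM : IsMaxIndepFam C M) (hc : c ∈ C) (hcM : c ∉ M)
    {c' : ℝ × ℝ} (hc' : c' ∈ M)
    (hdisj : ∀ d ∈ M, d ≠ c' → Disjoint (Set.Ioo c.1 c.2) (Set.Ioo d.1 d.2)) :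
    IsMaxIndepFam C (insert c (M.erase c')) := by
  have hcM' : c ∉ M.erase c' := fun h => hcM (Finset.mem_of_mem_erase h)
  refine ⟨Finset.insert_subset hc ((Finset.erase_subset _ _).trans hM.1),
    (hM.2.1.mono (Finset.erase_subset _ _)).insert_of_disjoint fun d hd _ =>
      hdisj d (Finset.mem_of_mem_erase hd) (Finset.ne_of_mem_erase hd),
    fun M' hM'C hM' => ?_⟩
  rw [Finset.card_insert_of_notMem hcM', Finset.card_erase_add_one hc']
  exact hM.2.2 M' hM'C hM'

theorem exists_fst_mem_Ioo (hM : IsMaxIndepFam C M)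
    (hmin : ∀ M', IsMaxIndepFam C M' → ∑ x ∈ M, x.1 ≤ ∑ x ∈ M', x.1)
    (hnonnested : NonNested C) (hc : c ∈ C \ M) : ∃ c' ∈ M, c.1 ∈ Set.Ioo c'.1 c'.2 := by
  obtain ⟨hcC, hcM⟩ := Finset.mem_sdiff.mp hc
  by_contra! hout
  have hinterleave : ∀ d ∈ M, ¬Disjoint (Set.Ioo c.1 c.2) (Set.Ioo d.1 d.2) →
      c.1 < d.1 ∧ d.1 < c.2 ∧ c.2 < d.2 := fun d hd hmeet =>
    have hne := hnonnested c hcC d (hM.1 hd) (fun h => hcM (h ▸ hd))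
    interleave_of_not_nested hmeet hne.1 hne.2 (hout d hd)
  obtain ⟨c', hc', hmeet⟩ := hM.exists_not_disjoint hcC hcM
  have hunique : ∀ d ∈ M, d ≠ c' → Disjoint (Set.Ioo c.1 c.2) (Set.Ioo d.1 d.2) := by
    intro d hd hdc'
    by_contra hmeet_d
    obtain ⟨-, hd₁, hd₂⟩ := hinterleave d hd hmeet_d
    obtain ⟨-, hc'₁, hc'₂⟩ := hinterleave c' hc' hmeet
    exact Set.disjoint_left.mp (hM.2.1 d hd c' hc' hdc') ⟨hd₁, hd₂⟩ ⟨hc'₁, hc'₂⟩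
  have hsum := hmin _ (hM.exchange hcC hcM hc' hunique)
  rw [Finset.sum_insert fun h => hcM (Finset.mem_of_mem_erase h),
    ← Finset.add_sum_erase M (fun x => x.1) hc'] at hsum
  linarith [(hinterleave c' hc' hmeet).1]

end IsMaxIndepFam

theorem exists_max_independent_subfamily_general
    (C : Finset (ℝ × ℝ))
    (hnonnested : ∀ c ∈ C, ∀ c' ∈ C, c ≠ c' →
      ¬ Set.Ioo c.1 c.2 ⊆ Set.Ioo c'.1 c'.2 ∧
      ¬ Set.Ioo c'.1 c'.2 ⊆ Set.Ioo c.1 c.2) :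
    ∃ M ⊆ C, IndepFam M ∧
      (∀ M' ⊆ C, IndepFam M' → M'.card ≤ M.card) ∧
      (∀ c ∈ C \ M, ∃ c' ∈ M, c.1 ∈ Set.Ioo c'.1 c'.2) := by
  obtain ⟨M, hM, hmin⟩ := exists_isMaxIndepFam_forall_sum_fst_le C
  exact ⟨M, hM.1, hM.2.1, hM.2.2, fun c hc => hM.exists_fst_mem_Ioo hmin hnonnested hc⟩

/-- For a finite, pairwise non-nested family of nonempty open intervals there is a
maximum-cardinality independent subfamily `M` such that every interval outside `M`
has its left endpoint inside some interval of `M`. -/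
theorem exists_max_independent_subfamily
    (C : Finset (ℝ × ℝ))
    (hne : ∀ c ∈ C, c.1 < c.2)
    (hnonnested : ∀ c ∈ C, ∀ c' ∈ C, c ≠ c' →
      ¬ Set.Ioo c.1 c.2 ⊆ Set.Ioo c'.1 c'.2 ∧
      ¬ Set.Ioo c'.1 c'.2 ⊆ Set.Ioo c.1 c.2) :
    ∃ M ⊆ C, IndepFam M ∧
      (∀ M' ⊆ C, IndepFam M' → M'.card ≤ M.card) ∧
      (∀ c ∈ C \ M, ∃ c' ∈ M, c.1 ∈ Set.Ioo c'.1 c'.2) :=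
  exists_max_independent_subfamily_general C hnonnested
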